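/- Let n ≥ 4 be even. There exists a tiling of the bi-infinite strip ℤ×{0,…,n+1} of width n+2 by 𝒯_n = {T1, T2, T3, T4} that does not follow the rectangular pattern. -/
import Mathlib

/-- A cell of the square lattice. -/
abbrev Cell : Type := ℤ × ℤ

/-- Translate a tile by a vector. -/
def translateTile (v : Cell) (t : Set Cell) : Set Cell := (fun p => p + v) '' t

/-- The ribbon L-shaped n-omino T1. -/
def T1 (n : ℕ) : Set Cell :=
  {p : Cell | p.1 = 0 ∧ 0 ≤ p.2 ∧ p.2 ≤ (n : ℤ) - 2} ∪ {((1 : ℤ), (0 : ℤ))}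

/-- The ribbon L-shaped n-omino T2. -/
def T2 (n : ℕ) : Set Cell :=
  {p : Cell | p.1 = 1 ∧ 0 ≤ p.2 ∧ p.2 ≤ (n : ℤ) - 2} ∪ {((0 : ℤ), (n : ℤ) - 2)}

/-- The ribbon L-shaped n-omino T3. -/
def T3 (n : ℕ) : Set Cell :=
  {p : Cell | p.2 = 0 ∧ 0 ≤ p.1 ∧ p.1 ≤ (n : ℤ) - 2} ∪ {((0 : ℤ), (1 : ℤ))}

/-- The ribbon L-shaped n-omino T4. -/
def T4 (n : ℕ) : Set Cell :=
  {p : Cell | p.2 = 1 ∧ 0 ≤ p.1 ∧ p.1 ≤ (n : ℤ) - 2} ∪ {(((n : ℤ) - 2), (0 : ℤ))}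

/-- The 2×2 square tile T5. -/
def T5 : Set Cell := {p : Cell | (p.1 = 0 ∨ p.1 = 1) ∧ (p.2 = 0 ∨ p.2 = 1)}

/-- The tile set 𝒯_n = {T1, T2, T3, T4}. -/
def Tset (n : ℕ) : Set (Set Cell) := {T1 n, T2 n, T3 n, T4 n}

/-- The tile set 𝒯_n⁺ = {T1, T2, T3, T4, T5}. -/
def TsetPlus (n : ℕ) : Set (Set Cell) := Tset n ∪ {T5}

/-- A tiling of a region `R` by translates of tiles from `𝒯`:
a family of pairwise disjoint translates of tiles from `𝒯` whose union is `R`. -/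
def IsTiling (𝒯 : Set (Set Cell)) (R : Set Cell) (tiling : Set (Set Cell)) : Prop :=
  (∀ P ∈ tiling, ∃ t ∈ 𝒯, ∃ v : Cell, P = translateTile v t) ∧
  (∀ P ∈ tiling, ∀ Q ∈ tiling, P ≠ Q → Disjoint P Q) ∧
  ⋃₀ tiling = R

/-- The a×b rectangle (height a, base b) with lower-left corner v. -/
def rect (a b : ℕ) (v : Cell) : Set Cell :=
  {p : Cell | v.1 ≤ p.1 ∧ p.1 < v.1 + (b : ℤ) ∧ v.2 ≤ p.2 ∧ p.2 < v.2 + (a : ℤ)}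

/-- A lattice point with both coordinates even. -/
def EvenPt (v : Cell) : Prop := Even v.1 ∧ Even v.2

/-- `P` is a translate of one of the four ribbon L-shaped n-ominoes. -/
def IsRibbonL (n : ℕ) (P : Set Cell) : Prop :=
  ∃ v : Cell,
    P = translateTile v (T1 n) ∨ P = translateTile v (T2 n) ∨
    P = translateTile v (T3 n) ∨ P = translateTile v (T4 n)

/-- `P` is the union of exactly two ribbon L-shaped n-omino tiles of the tiling. -/
def TwoLRect (n : ℕ) (tiling : Set (Set Cell)) (P : Set Cell) : Prop :=
  ∃ A ∈ tiling, ∃ B ∈ tiling,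
    A ≠ B ∧ IsRibbonL n A ∧ IsRibbonL n B ∧ P = A ∪ B

/-- The first quadrant. -/
def Q1 : Set Cell := {p : Cell | 0 ≤ p.1 ∧ 0 ≤ p.2}

/-- A tiling by 𝒯_n follows the rectangular pattern on region `R`:
`R` is partitioned into 2×n and n×2 rectangles with all corners at even
coordinates, each the union of exactly two ribbon L-shaped n-omino tiles. -/
def FollowsRectPattern (n : ℕ) (tiling : Set (Set Cell)) (R : Set Cell) : Prop :=
  ∃ parts : Set (Set Cell),
    (∀ P ∈ parts, ∀ Q ∈ parts, P ≠ Q → Disjoint P Q) ∧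
    ⋃₀ parts = R ∧
    ∀ P ∈ parts, ∃ v : Cell, EvenPt v ∧
      (P = rect 2 n v ∨ P = rect n 2 v) ∧ TwoLRect n tiling P

/-! ### Auxiliary construction -/

lemma mem_translate {t : Set Cell} {v p : Cell} : p ∈ translateTile v t ↔ p - v ∈ t := by
  constructor
  · rintro ⟨q, hq, rfl⟩; simpa using hq
  · intro h; exact ⟨p - v, h, by simp⟩

lemma memT3 {n : ℕ} {v p : Cell} : p ∈ translateTile v (T3 n) ↔
    ((p.2 = v.2 ∧ v.1 ≤ p.1 ∧ p.1 ≤ v.1 + (n:ℤ) - 2) ∨ (p.1 = v.1 ∧ p.2 = v.2 + 1)) := by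
  rw [mem_translate]
  simp only [T3, Set.mem_union, Set.mem_setOf_eq, Set.mem_singleton_iff, Prod.ext_iff,
    Prod.fst_sub, Prod.snd_sub]
  omega

lemma memT4 {n : ℕ} {v p : Cell} : p ∈ translateTile v (T4 n) ↔
    ((p.2 = v.2 + 1 ∧ v.1 ≤ p.1 ∧ p.1 ≤ v.1 + (n:ℤ) - 2) ∨ (p.1 = v.1 + (n:ℤ) - 2 ∧ p.2 = v.2)) := by
  rw [mem_translate]
  simp only [T4, Set.mem_union, Set.mem_setOf_eq, Set.mem_singleton_iff, Prod.ext_iff,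
    Prod.fst_sub, Prod.snd_sub]
  omega

/-- Horizontal shift of the band of rows `2j, 2j+1` : the top band is shifted by 1. -/
def sOff (n : ℕ) (j : ℤ) : ℤ := if 2 * j = (n : ℤ) then 1 else 0

/-- The `T3`-shaped tile of block `k` in band `j`. -/
def Atile (n : ℕ) (j k : ℤ) : Set Cell := translateTile (k * (n:ℤ) + sOff n j, 2 * j) (T3 n)

/-- The `T4`-shaped tile of block `k` in band `j`. -/
def Btile (n : ℕ) (j k : ℤ) : Set Cell :=
  translateTile (k * (n:ℤ) + sOff n j + 1, 2 * j) (T4 n)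

/-- The tiling of the strip. -/
def myTiling (n : ℕ) : Set (Set Cell) :=
  {P | ∃ j k : ℤ, 0 ≤ j ∧ 2 * j ≤ (n:ℤ) ∧ (P = Atile n j k ∨ P = Btile n j k)}

lemma memA {n : ℕ} {j k : ℤ} {p : Cell} : p ∈ Atile n j k ↔
    ((p.2 = 2*j ∧ k*(n:ℤ) + sOff n j ≤ p.1 ∧ p.1 ≤ k*(n:ℤ) + sOff n j + (n:ℤ) - 2) ∨
     (p.1 = k*(n:ℤ) + sOff n j ∧ p.2 = 2*j + 1)) := by
  rw [Atile, memT3]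

lemma memB {n : ℕ} {j k : ℤ} {p : Cell} : p ∈ Btile n j k ↔
    ((p.2 = 2*j + 1 ∧ k*(n:ℤ) + sOff n j + 1 ≤ p.1 ∧ p.1 ≤ k*(n:ℤ) + sOff n j + (n:ℤ) - 1) ∨
     (p.1 = k*(n:ℤ) + sOff n j + (n:ℤ) - 1 ∧ p.2 = 2*j)) := by
  rw [Btile, memT4]; constructor <;> (intro h; omega)

/-- Normalized membership: row parity and horizontal block. -/
lemma mem_norm {n : ℕ} (hn : 4 ≤ n) {j k : ℤ} {p : Cell} {P : Set Cell}
    (h : P = Atile n j k ∨ P = Btile n j k) (hp : p ∈ P) :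
    (p.2 = 2*j ∨ p.2 = 2*j + 1) ∧
      k*(n:ℤ) + sOff n j ≤ p.1 ∧ p.1 < k*(n:ℤ) + sOff n j + (n:ℤ) := by
  rcases h with rfl | rfl
  · rw [memA] at hp
    obtain ⟨c, hc⟩ : ∃ c, k*(n:ℤ) + sOff n j = c := ⟨_, rfl⟩
    rw [hc] at hp ⊢
    omega
  · rw [memB] at hp
    obtain ⟨c, hc⟩ : ∃ c, k*(n:ℤ) + sOff n j = c := ⟨_, rfl⟩
    rw [hc] at hp ⊢
    omega

lemma block_eq {n k k' a : ℤ} (hn : 0 < n) (h1 : k*n ≤ a) (h2 : a < k*n + n)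
    (h3 : k'*n ≤ a) (h4 : a < k'*n + n) : k = k' := by
  by_contra h
  rcases lt_or_gt_of_ne h with hlt | hlt
  · have : (k+1)*n ≤ k'*n :=
      mul_le_mul_of_nonneg_right (by omega) (by omega)
    nlinarith
  · have : (k'+1)*n ≤ k*n :=
      mul_le_mul_of_nonneg_right (by omega) (by omega)
    nlinarith

/-- Any two tiles of the tiling sharing a cell are equal. -/
lemma tile_unique {n : ℕ} (hn : 4 ≤ n) {P Q : Set Cell}
    (hP : P ∈ myTiling n) (hQ : Q ∈ myTiling n) {p : Cell} (hpP : p ∈ P) (hpQ : p ∈ Q) :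
    P = Q := by
  obtain ⟨j, k, _, _, hP⟩ := hP
  obtain ⟨j', k', _, _, hQ⟩ := hQ
  have h1 := mem_norm hn hP hpP
  have h2 := mem_norm hn hQ hpQ
  have hj : j = j' := by omega
  subst hj
  have hk : k = k' := by
    have hn0 : (0:ℤ) < (n:ℤ) := by exact_mod_cast Nat.lt_of_lt_of_le (by norm_num) hn
    exact block_eq (n := (n:ℤ)) (a := p.1 - sOff n j) hn0 (by linarith [h1.2.1])
      (by linarith [h1.2.2]) (by linarith [h2.2.1]) (by linarith [h2.2.2])
  subst hk
  rcases hP with rfl | rfl <;> rcases hQ with rfl | rfl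
  · rfl
  · rw [memA] at hpP; rw [memB] at hpQ; exfalso
    obtain ⟨c, hc⟩ : ∃ c, k*(n:ℤ) + sOff n j = c := ⟨_, rfl⟩
    rw [hc] at hpP hpQ
    omega
  · rw [memB] at hpP; rw [memA] at hpQ; exfalso
    obtain ⟨c, hc⟩ : ∃ c, k*(n:ℤ) + sOff n j = c := ⟨_, rfl⟩
    rw [hc] at hpP hpQ
    omega
  · rfl

/-- There is a tiling of the bi-infinite strip of width n+2 by 𝒯_n that does
not follow the rectangular pattern. -/
theorem strip_tiling_not_rect_pattern
    (n : ℕ) (hn4 : 4 ≤ n) (hn : Even n) :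
    ∃ tiling : Set (Set Cell),
      IsTiling (Tset n) {p : Cell | 0 ≤ p.2 ∧ p.2 ≤ (n : ℤ) + 1} tiling ∧
      ¬ FollowsRectPattern n tiling {p : Cell | 0 ≤ p.2 ∧ p.2 ≤ (n : ℤ) + 1} := by
  obtain ⟨m, hm⟩ := hn
  have hmZ : 2 * (m:ℤ) = (n:ℤ) := by push_cast [hm]; ring
  have hnZ : (4:ℤ) ≤ (n:ℤ) := by exact_mod_cast hn4
  refine ⟨myTiling n, ⟨?_, ?_, ?_⟩, ?_⟩
  · -- every tile is a translate of a tile of Tset n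
    rintro P ⟨j, k, _, _, rfl | rfl⟩
    · exact ⟨T3 n, by simp [Tset], _, rfl⟩
    · exact ⟨T4 n, by simp [Tset], _, rfl⟩
  · -- pairwise disjoint
    intro P hP Q hQ hne
    rw [Set.disjoint_left]
    intro p hpP hpQ
    exact hne (tile_unique hn4 hP hQ hpP hpQ)
  · -- union is the strip
    ext p
    simp only [Set.mem_sUnion, Set.mem_setOf_eq]
    constructor
    · rintro ⟨P, ⟨j, k, hj0, hjn, hPt⟩, hpP⟩
      have := mem_norm hn4 hPt hpP
      omega
    · rintro ⟨h0, h1⟩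
      set j : ℤ := p.2 / 2 with hj
      have hp2 : p.2 = 2*j ∨ p.2 = 2*j + 1 := by omega
      have hj0 : 0 ≤ j := by omega
      have hjn : 2 * j ≤ (n:ℤ) := by omega
      have hdm := Int.mul_ediv_add_emod (p.1 - sOff n j) (n:ℤ)
      have hr0 : 0 ≤ (p.1 - sOff n j) % (n:ℤ) := Int.emod_nonneg _ (by omega)
      have hrn : (p.1 - sOff n j) % (n:ℤ) < (n:ℤ) := Int.emod_lt_of_pos _ (by omega)
      set k : ℤ := (p.1 - sOff n j) / (n:ℤ) with hk
      set r : ℤ := (p.1 - sOff n j) % (n:ℤ) with hr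
      have hp1 : p.1 = k * (n:ℤ) + sOff n j + r := by
        have hcomm : (n:ℤ) * k = k * (n:ℤ) := mul_comm _ _
        linarith [hdm]
      rcases hp2 with h2 | h2
      · by_cases hc : r ≤ (n:ℤ) - 2
        · exact ⟨Atile n j k, ⟨j, k, hj0, hjn, Or.inl rfl⟩,
            memA.mpr (Or.inl ⟨h2, by linarith, by linarith⟩)⟩
        · have hc' : r = (n:ℤ) - 1 := by omega
          exact ⟨Btile n j k, ⟨j, k, hj0, hjn, Or.inr rfl⟩,
            memB.mpr (Or.inr ⟨by linarith, h2⟩)⟩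
      · by_cases hc : r = 0
        · exact ⟨Atile n j k, ⟨j, k, hj0, hjn, Or.inl rfl⟩,
            memA.mpr (Or.inr ⟨by linarith, h2⟩)⟩
        · have hc' : 1 ≤ r := by omega
          exact ⟨Btile n j k, ⟨j, k, hj0, hjn, Or.inr rfl⟩,
            memB.mpr (Or.inl ⟨h2, by linarith, by linarith⟩)⟩
  · -- does not follow the rectangular pattern
    rintro ⟨parts, hdisj, hcov, hpat⟩
    have hsm : sOff n (m:ℤ) = 1 := by rw [sOff, if_pos hmZ]
    have hA0mem : Atile n (m:ℤ) 0 ∈ myTiling n := ⟨(m:ℤ), 0, by positivity, by omega, Or.inl rfl⟩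
    have hBmem : Btile n (m:ℤ) (-1) ∈ myTiling n := ⟨(m:ℤ), -1, by positivity, by omega, Or.inr rfl⟩
    have hc1 : ((1:ℤ), (n:ℤ)) ∈ Atile n (m:ℤ) 0 := memA.mpr (Or.inl (by simp [hsm]; omega))
    have hc2 : ((1:ℤ), (n:ℤ)+1) ∈ Atile n (m:ℤ) 0 := memA.mpr (Or.inr (by simp [hsm]; omega))
    have hc3 : (((n:ℤ)-1), (n:ℤ)) ∈ Atile n (m:ℤ) 0 := memA.mpr (Or.inl (by simp [hsm]; omega))
    have hd1 : ((0:ℤ), (n:ℤ)) ∈ Btile n (m:ℤ) (-1) := memB.mpr (Or.inr (by simp [hsm]; omega))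
    have hd2 : ((2-(n:ℤ)), (n:ℤ)+1) ∈ Btile n (m:ℤ) (-1) := memB.mpr (Or.inl (by simp [hsm]; omega))
    have h1R : ((1:ℤ), (n:ℤ)) ∈ {p : Cell | 0 ≤ p.2 ∧ p.2 ≤ (n : ℤ) + 1} := by
      simp only [Set.mem_setOf_eq]; omega
    rw [← hcov] at h1R
    obtain ⟨P, hPparts, hpP⟩ := h1R
    obtain ⟨v, hev, hrect, A', hA't, B', hB't, hne, _, _, hPuv⟩ := hpat P hPparts
    have hA0sub : Atile n (m:ℤ) 0 ⊆ P := by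
      rw [hPuv] at hpP ⊢
      rcases hpP with h | h
      · rw [tile_unique hn4 hA0mem hA't hc1 h]; exact Set.subset_union_left
      · rw [tile_unique hn4 hA0mem hB't hc1 h]; exact Set.subset_union_right
    have hP2 : ((1:ℤ), (n:ℤ)+1) ∈ P := hA0sub hc2
    have hP3 : (((n:ℤ)-1), (n:ℤ)) ∈ P := hA0sub hc3
    have hP1 : ((1:ℤ), (n:ℤ)) ∈ P := hA0sub hc1
    obtain ⟨a, ha⟩ := hev.1
    rcases hrect with rfl | rfl
    · simp only [rect, Set.mem_setOf_eq] at hP1 hP2 hP3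
      have hP0 : ((0:ℤ), (n:ℤ)) ∈ rect 2 n v := by
        simp only [rect, Set.mem_setOf_eq]
        refine ⟨by omega, by omega, by omega, by omega⟩
      rw [hPuv] at hP0
      have hBsub : Btile n (m:ℤ) (-1) ⊆ rect 2 n v := by
        rw [hPuv]
        rcases hP0 with h | h
        · rw [tile_unique hn4 hBmem hA't hd1 h]; exact Set.subset_union_left
        · rw [tile_unique hn4 hBmem hB't hd1 h]; exact Set.subset_union_right
      have hbad := hBsub hd2
      simp only [rect, Set.mem_setOf_eq] at hbad
      omega
    · simp only [rect, Set.mem_setOf_eq] at hP1 hP3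
      omega
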